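/- Let v ∈ S_n be k-Grassmannian and let u ≤ v. Then the unique maximal element of the Bruhat interval [u,v] whose initial set {y(1),...,y(k)} equals {u(1),...,u(k)} coincides with the unique maximal element of the coset u·(S_k × S_{n-k}) intersected with [id,v] having that initial set; in particular [u,v] ∩ u·(S_k × S_{n-k}) has a unique maximal element. -/

import Mathlib

def galeList {n : ℕ} (I J : Finset (Fin n)) : Prop :=
  List.Forall₂ (· ≤ ·) (I.sort (· ≤ ·)) (J.sort (· ≤ ·))

def bruhatLE {n : ℕ} (u v : Equiv.Perm (Fin n)) : Prop :=
  ∀ i : Fin n, galeList ((Finset.Iic i).image u) ((Finset.Iic i).image v)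

def IsGrassmannian {n : ℕ} (k : ℕ) (v : Equiv.Perm (Fin n)) : Prop :=
  (∀ i j : Fin n, i < j → (j : ℕ) < k → v i < v j) ∧
  (∀ i j : Fin n, i < j → k ≤ (i : ℕ) → v i < v j)

/-- The initial set `y[k] = {y(1),…,y(k)}` of a permutation. -/
def initSet {n : ℕ} (k : ℕ) (y : Equiv.Perm (Fin n)) : Finset (Fin n) :=
  (Finset.univ.filter fun j : Fin n => (j : ℕ) < k).image y

/-- Membership in the coset `u · (S_k × S_{n-k})`, where `S_k × S_{n-k}` is the
subgroup of permutations preserving the first `k` positions setwise. -/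
def inCoset {n : ℕ} (k : ℕ) (u y : Equiv.Perm (Fin n)) : Prop :=
  ∃ σ : Equiv.Perm (Fin n), (∀ j : Fin n, ((σ j : ℕ) < k ↔ (j : ℕ) < k)) ∧ y = u * σ

/-!
By the tableau criterion defining `bruhatLE`, `y ≤ v` iff `y[i] ≤ v[i]` in the Gale order for
every `i`, where `y[i] = initSet i y`. For each `i`, the `i`-sets that can occur as `y[i]` for
some `y ≤ v` with `y[k] = A` (contained in `A` for `i ≤ k`, containing `A` for `i ≥ k`, and below
`v[i]`) are closed under the Gale join, so they have a Gale-greatest member `M i`. Since `v` is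
`k`-Grassmannian, `v[i+1] = v[i] ∪ {v(i+1)}` where `v(i+1)` exceeds `v[i]` when `i < k` and lies
below the complement of `v[i+1]` when `i ≥ k`; an exchange argument then gives `M i ⊆ M (i+1)`
(for `i ≥ k` after passing to complements and reversing the order). So the `M i` are the
initial sets of a permutation `m`, which is the greatest `y ≤ v` with `y[k] = A`. Finally, the
coset `u·(S_k × S_{n-k})` consists exactly of the `y` with `y[k] = u[k]`, so both maxima are `m`.
-/

open Finset

section Lists

variable {α : Type*}

theorem List.Forall₂.countP_le_countP [Preorder α] [DecidableLE α] {l₁ l₂ : List α}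
    (h : List.Forall₂ (· ≤ ·) l₁ l₂) (x : α) :
    l₁.countP (fun y => x ≤ y) ≤ l₂.countP (fun y => x ≤ y) := by
  induction h with
  | nil => rfl
  | cons hab _ ih =>
    simp only [List.countP_cons, decide_eq_true_eq]
    split_ifs with hxa hxb
    · omega
    · exact absurd (hxa.trans hab) hxb
    all_goals omega

theorem List.forall₂_le_of_countP_le [LinearOrder α] :
    ∀ {l₁ l₂ : List α}, l₁.Pairwise (· < ·) → l₂.Pairwise (· < ·) → l₁.length = l₂.length →
      (∀ x, l₁.countP (fun y => x ≤ y) ≤ l₂.countP (fun y => x ≤ y)) →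
      List.Forall₂ (· ≤ ·) l₁ l₂
  | [], [], _, _, _, _ => .nil
  | a :: t₁, b :: t₂, h₁, h₂, hlen, hcount => by
    rw [List.pairwise_cons] at h₁ h₂
    simp only [List.length_cons, Nat.add_right_cancel_iff] at hlen
    have hcount_cons := fun x => by simpa only [List.countP_cons, decide_eq_true_eq] using hcount x
    -- counting the elements `≥ a`: all of `a :: t₁`, at most `t₂` if `b < a`
    have hab : a ≤ b := by
      by_contra! hba
      have h₁a : t₁.countP (fun y => a ≤ y) = t₁.length :=
        List.countP_eq_length.2 fun y hy => by simpa using (h₁.1 y hy).le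
      have := hcount_cons a
      simp only [le_refl, if_true, h₁a, not_le.2 hba, if_false] at this
      have := List.countP_le_length (p := fun y => decide (a ≤ y)) (l := t₂)
      omega
    refine .cons hab (List.forall₂_le_of_countP_le h₁.2 h₂.2 hlen fun x => ?_)
    by_cases hxb : x ≤ b
    · by_cases hxa : x ≤ a
      · simpa [hxa, hxb] using hcount_cons x
      · have : t₂.countP (fun y => x ≤ y) = t₂.length :=
          List.countP_eq_length.2 fun y hy => by simpa using hxb.trans (h₂.1 y hy).le
        rw [this, ← hlen]
        exact List.countP_le_length
    · have hxa : ¬ x ≤ a := fun h => hxb (h.trans hab)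
      simpa [hxa, hxb] using hcount_cons x
  | [], _ :: _, _, _, hlen, _ | _ :: _, [], _, _, hlen, _ => by simp at hlen

end Lists

section Gale

variable {n : ℕ}

def countGe (x : Fin n) (S : Finset (Fin n)) : ℕ := #{y ∈ S | x ≤ y}

def countGt (x : Fin n) (S : Finset (Fin n)) : ℕ := #{y ∈ S | x < y}

/-- Counting form of the Gale order `galeList`. -/
def GaleLE (S T : Finset (Fin n)) : Prop :=
  #S = #T ∧ ∀ x, countGe x S ≤ countGe x T

theorem countP_sort_eq_countGe (S : Finset (Fin n)) (x : Fin n) :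
    (S.sort (· ≤ ·)).countP (fun y => x ≤ y) = countGe x S := by
  rw [countGe, ← Multiset.coe_countP, Finset.sort_eq, Multiset.countP_eq_card_filter]
  rfl

theorem galeList_iff_galeLE (S T : Finset (Fin n)) : galeList S T ↔ GaleLE S T := by
  refine ⟨fun h => ⟨?_, fun x => ?_⟩, fun ⟨hcard, hcount⟩ => ?_⟩
  · simpa using h.length_eq
  · simpa only [countP_sort_eq_countGe] using h.countP_le_countP x
  · refine List.forall₂_le_of_countP_le (sortedLT_sort S).pairwise (sortedLT_sort T).pairwise
      (by simpa using hcard) fun x => ?_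
    simpa only [countP_sort_eq_countGe] using hcount x

theorem countGe_le_card (x : Fin n) (S : Finset (Fin n)) : countGe x S ≤ #S :=
  card_filter_le _ _

theorem countGe_anti {x x' : Fin n} (h : x ≤ x') (S : Finset (Fin n)) :
    countGe x' S ≤ countGe x S :=
  card_le_card <| monotone_filter_right S fun _ _ hy => h.trans hy

theorem countGe_insert {a : Fin n} {S : Finset (Fin n)} (ha : a ∉ S) (x : Fin n) :
    countGe x (insert a S) = countGe x S + if x ≤ a then 1 else 0 := by
  unfold countGe
  rw [filter_insert]
  split_ifs
  · exact card_insert_of_notMem fun h => ha (mem_filter.1 h).1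
  · rfl

theorem countGe_eq_erase {b : Fin n} {S : Finset (Fin n)} (hb : b ∈ S) (x : Fin n) :
    countGe x S = countGe x (S.erase b) + if x ≤ b then 1 else 0 := by
  conv_lhs => rw [← insert_erase hb]
  exact countGe_insert (notMem_erase b S) x

theorem countGe_eq_countGt_add (x : Fin n) (S : Finset (Fin n)) :
    countGe x S = countGt x S + if x ∈ S then 1 else 0 := by
  have : {y ∈ S | x ≤ y} = {y ∈ S | x < y} ∪ {y ∈ S | y = x} := by
    ext y; simp [le_iff_lt_or_eq, eq_comm, and_or_left]
  rw [countGe, countGt, this, card_union_of_disjoint (disjoint_filter.2 fun y _ h he => h.ne' he),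
    filter_eq']
  split_ifs <;> rfl

theorem countGt_le_countGt_of_galeLE {S T : Finset (Fin n)} (h : GaleLE S T) (x : Fin n) :
    countGt x S ≤ countGt x T := by
  by_cases hx : (x : ℕ) + 1 < n
  · -- on `Fin n`, `x < y` unfolds to `x + 1 ≤ y`
    have hgt (U : Finset (Fin n)) : countGt x U = countGe ⟨x + 1, hx⟩ U := rfl
    rw [hgt, hgt]
    exact h.2 _
  · have hgt (U : Finset (Fin n)) : countGt x U = 0 := by
      refine card_eq_zero.2 <| filter_eq_empty_iff.2 fun y _ hxy => ?_
      have := y.isLt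
      omega
    rw [hgt, hgt]

theorem GaleLE.refl (S : Finset (Fin n)) : GaleLE S S := ⟨rfl, fun _ => le_rfl⟩

theorem GaleLE.trans {S T U : Finset (Fin n)} (h₁ : GaleLE S T) (h₂ : GaleLE T U) :
    GaleLE S U :=
  ⟨h₁.1.trans h₂.1, fun x => (h₁.2 x).trans (h₂.2 x)⟩

instance : IsTrans (Finset (Fin n)) GaleLE := ⟨fun _ _ _ => GaleLE.trans⟩

theorem GaleLE.antisymm {S T : Finset (Fin n)} (h₁ : GaleLE S T) (h₂ : GaleLE T S) : S = T := by
  ext a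
  have hge := le_antisymm (h₁.2 a) (h₂.2 a)
  have hgt := le_antisymm (countGt_le_countGt_of_galeLE h₁ a) (countGt_le_countGt_of_galeLE h₂ a)
  rw [countGe_eq_countGt_add, countGe_eq_countGt_add, hgt] at hge
  by_cases haS : a ∈ S <;> by_cases haT : a ∈ T <;> simp_all

end Gale

section GaleSup

variable {n : ℕ}

theorem countGe_image_univ {i : ℕ} {f : Fin i → Fin n} (hf : Function.Injective f) (x : Fin n) :
    countGe x (univ.image f) = #{r | x ≤ f r} := by
  rw [countGe, filter_image, card_image_of_injective _ hf]

/-- The Gale join: the entrywise maximum of the two sorted sequences. -/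
theorem exists_galeSup {i : ℕ} {S T : Finset (Fin n)} (hSi : #S = i) (hTi : #T = i) :
    ∃ J, J ⊆ S ∪ T ∧ S ∩ T ⊆ J ∧ #J = i ∧
      ∀ x, countGe x J = max (countGe x S) (countGe x T) := by
  set eS := S.orderEmbOfFin hSi
  set eT := T.orderEmbOfFin hTi
  set f : Fin i → Fin n := fun r => max (eS r) (eT r)
  have hf : StrictMono f := fun r r' h => max_lt_max (eS.strictMono h) (eT.strictMono h)
  have hS : univ.image eS = S := image_orderEmbOfFin_univ S hSi
  have hT : univ.image eT = T := image_orderEmbOfFin_univ T hTi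
  refine ⟨univ.image f, ?_, ?_, ?_, fun x => ?_⟩
  · simp only [image_subset_iff, mem_univ, true_implies, mem_union]
    intro r
    rcases max_choice (eS r) (eT r) with hr | hr
    · exact .inl (by simp only [f, hr]; exact orderEmbOfFin_mem S hSi r)
    · exact .inr (by simp only [f, hr]; exact orderEmbOfFin_mem T hTi r)
  · intro a ha
    rw [mem_inter, ← hS, ← hT] at ha
    obtain ⟨⟨p, -, rfl⟩, ⟨q, -, hq⟩⟩ := And.imp mem_image.1 mem_image.1 ha
    refine mem_image.2 ?_
    rcases le_total p q with hpq | hqp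
    · exact ⟨p, mem_univ _, max_eq_left (hq ▸ eT.monotone hpq)⟩
    · exact ⟨q, mem_univ _, hq ▸ max_eq_right (hq ▸ eS.monotone hqp)⟩
  · rw [card_image_of_injective _ hf.injective, card_univ, Fintype.card_fin]
  · rw [← hS, ← hT, countGe_image_univ hf.injective, countGe_image_univ eS.injective,
      countGe_image_univ eT.injective]
    set U := univ.filter fun r => x ≤ eS r
    set V := univ.filter fun r => x ≤ eT r
    have hunion : univ.filter (fun r => x ≤ f r) = U ∪ V := by
      ext r; simp [f, U, V]
    have htotal : U ⊆ V ∨ V ⊆ U := by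
      simpa [← coe_subset, U, V, Set.subset_def] using
        ((isUpperSet_Ici x).preimage eS.monotone).total ((isUpperSet_Ici x).preimage eT.monotone)
    rw [hunion]
    rcases htotal with hST | hTS
    · rw [union_eq_right.2 hST, max_eq_right (card_le_card hST)]
    · rw [union_eq_left.2 hTS, max_eq_left (card_le_card hTS)]

theorem DirectedOn.exists_forall_rel_of_finite {α : Type*} {r : α → α → Prop} [IsTrans α r]
    {s : Set α} (hd : DirectedOn r s) (hs : s.Nonempty) (hfin : s.Finite) :
    ∃ M ∈ s, ∀ a ∈ s, r a M := by
  have := hs.to_subtype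
  have := hfin.to_subtype
  obtain ⟨M, hM⟩ := (directedOn_iff_directed.1 hd).finite_le id
  exact ⟨M, M.2, fun a ha => hM ⟨a, ha⟩⟩

end GaleSup

section Exchange

variable {n : ℕ}

def IsGaleGreatest (s : Set (Finset (Fin n))) (M : Finset (Fin n)) : Prop :=
  M ∈ s ∧ ∀ S ∈ s, GaleLE S M

theorem countGe_pos_iff {x : Fin n} {S : Finset (Fin n)} : 0 < countGe x S ↔ ∃ y ∈ S, x ≤ y := by
  rw [countGe, card_pos, filter_nonempty_iff]

theorem countGe_le_of_galeLE_erase {a b : Fin n} {M N : Finset (Fin n)} (haM : a ∈ M)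
    (haN : a ∉ N) (h : GaleLE (N.erase b) M) : countGe a N ≤ countGe a M := by
  have hN : countGt a N ≤ countGt a (N.erase b) + 1 := by
    rw [countGt, countGt, filter_erase]
    have := pred_card_le_card_erase (s := {y ∈ N | a < y}) (a := b)
    omega
  have := countGt_le_countGt_of_galeLE h a
  rw [countGe_eq_countGt_add, countGe_eq_countGt_add, if_neg haN, if_pos haM]
  omega

theorem galeLE_erase_of_insert {N W : Finset (Fin n)} {t w : Fin n} (hw : ∀ y ∈ W, y < w)
    (htN : t ∈ N) (ht : ∀ y ∈ N, y ≤ t) (hN : GaleLE N (insert w W)) :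
    GaleLE (N.erase t) W := by
  have hwW : w ∉ W := fun h => lt_irrefl w (hw w h)
  have htw : t ≤ w := by
    obtain ⟨y, hy, hty⟩ := countGe_pos_iff.1 <|
      (countGe_pos_iff.2 ⟨t, htN, le_rfl⟩).trans_le (hN.2 t)
    rcases mem_insert.1 hy with rfl | hyW
    exacts [hty, hty.trans (hw y hyW).le]
  refine ⟨?_, fun x => ?_⟩
  · have := card_erase_add_one htN
    rw [hN.1, card_insert_of_notMem hwW] at this
    omega
  · have hNx := hN.2 x
    rw [countGe_eq_erase htN x, countGe_insert hwW] at hNx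
    by_cases hxt : x ≤ t
    · simp only [hxt, hxt.trans htw, if_true] at hNx
      omega
    · have : countGe x N = 0 := card_eq_zero.2 <| filter_eq_empty_iff.2 fun y hy hxy =>
        hxt (hxy.trans (ht y hy))
      rw [countGe_eq_erase htN x] at this
      omega

theorem galeLE_insert_erase {N T : Finset (Fin n)} {a b : Fin n} (hbN : b ∈ N) (haN : a ∉ N)
    (hba : b < a) (hgap : ∀ y ∈ N, y < a → y ≤ b) (hNT : GaleLE N T)
    (hroom : ∀ x, b < x → x ≤ a → countGe a N < countGe x T) :
    GaleLE (insert a (N.erase b)) T := by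
  have haN' : a ∉ N.erase b := fun h => haN (mem_of_mem_erase h)
  have hcount (x : Fin n) : countGe x (insert a (N.erase b)) + (if x ≤ b then 1 else 0) =
      countGe x N + if x ≤ a then 1 else 0 := by
    rw [countGe_insert haN', countGe_eq_erase hbN x]
    omega
  refine ⟨?_, fun x => ?_⟩
  · rw [card_insert_of_notMem haN', card_erase_add_one hbN, hNT.1]
  · have hx := hcount x
    have := hNT.2 x
    by_cases hxb : x ≤ b
    · simp only [hxb, hxb.trans hba.le, if_true] at hx
      omega
    by_cases hxa : x ≤ a
    · have hflat : countGe x N = countGe a N := congrArg card <| filter_congr fun y hy =>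
        ⟨fun hxy => not_lt.1 fun hya => hxb (hxy.trans (hgap y hy hya)), hxa.trans⟩
      have := hroom x (not_le.1 hxb) hxa
      simp only [hxb, hxa, if_true, if_false] at hx
      omega
    · simp only [hxb, hxa, if_false] at hx
      omega

/-- For `a ∈ M \ N`, deleting the top of `N` gives a competitor of `M`, whence
`countGe a N ≤ countGe a M`; so `N` has elements below `a`, and trading the largest of them for `a`
gives a competitor of `N` that is not below `N`. -/
theorem IsGaleGreatest.subset_of_insert {A W M N : Finset (Fin n)} {w : Fin n}
    (hw : ∀ y ∈ W, y < w) (hM : IsGaleGreatest {S | S ⊆ A ∧ GaleLE S W} M)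
    (hN : IsGaleGreatest {S | S ⊆ A ∧ GaleLE S (insert w W)} N) : M ⊆ N := by
  obtain ⟨⟨hMA, hMW⟩, hMmax⟩ := hM
  obtain ⟨⟨hNA, hNW⟩, hNmax⟩ := hN
  have hwW : w ∉ W := fun h => lt_irrefl w (hw w h)
  have hcardN : #N = #M + 1 := by rw [hNW.1, card_insert_of_notMem hwW, hMW.1]
  intro a haM
  by_contra haN
  obtain ⟨t, htN, ht⟩ := N.exists_max_image id (card_pos.1 (by omega))
  have hle : countGe a N ≤ countGe a M := countGe_le_of_galeLE_erase haM haN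
    (hMmax _ ⟨(erase_subset _ _).trans hNA, galeLE_erase_of_insert hw htN ht hNW⟩)
  have hbelow : (N.filter (· < a)).Nonempty := by
    by_contra hempty
    have : countGe a N = #N := congrArg card <| filter_true_of_mem fun y hy =>
      not_lt.1 fun hya => hempty ⟨y, mem_filter.2 ⟨hy, hya⟩⟩
    have := countGe_le_card a M
    omega
  obtain ⟨b, hb, hbmax⟩ := (N.filter (· < a)).exists_max_image id hbelow
  obtain ⟨hbN, hba⟩ := mem_filter.1 hb
  have haw : a ≤ w := by
    obtain ⟨y, hyW, hay⟩ := countGe_pos_iff.1 <|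
      (countGe_pos_iff.2 ⟨a, haM, le_rfl⟩).trans_le (hMW.2 a)
    exact hay.trans (hw y hyW).le
  have hX : insert a (N.erase b) ∈ {S | S ⊆ A ∧ GaleLE S (insert w W)} := by
    refine ⟨insert_subset (hMA haM) ((erase_subset _ _).trans hNA),
      galeLE_insert_erase hbN haN hba (fun y hy hya => hbmax y (mem_filter.2 ⟨hy, hya⟩))
        hNW fun x _ hxa => ?_⟩
    rw [countGe_insert hwW, if_pos (hxa.trans haw)]
    have := (countGe_anti hxa M).trans (hMW.2 x)
    omega
  have := (hNmax _ hX).2 a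
  rw [countGe_insert fun h => haN (mem_of_mem_erase h), countGe_eq_erase hbN a,
    if_neg (not_le.2 hba), if_pos le_rfl] at this
  omega

end Exchange

section Duality

variable {n : ℕ}

def galeDual (S : Finset (Fin n)) : Finset (Fin n) := Sᶜ.image Fin.rev

theorem mem_galeDual {S : Finset (Fin n)} {x : Fin n} : x ∈ galeDual S ↔ x.rev ∉ S := by
  simp [galeDual, Fin.rev_eq_iff]

theorem galeDual_galeDual (S : Finset (Fin n)) : galeDual (galeDual S) = S := by
  ext x; simp [mem_galeDual]

theorem galeDual_subset_galeDual {S T : Finset (Fin n)} (h : S ⊆ T) : galeDual T ⊆ galeDual S :=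
  fun _ hx => mem_galeDual.2 fun hS => mem_galeDual.1 hx (h hS)

theorem card_galeDual (S : Finset (Fin n)) : #(galeDual S) = n - #S := by
  rw [galeDual, card_image_of_injective _ Fin.rev_injective, card_compl, Fintype.card_fin]

theorem galeDual_insert {W : Finset (Fin n)} {w : Fin n} (hwW : w ∉ W) :
    insert w.rev (galeDual (insert w W)) = galeDual W := by
  ext x
  simp only [mem_insert, mem_galeDual, not_or]
  constructor
  · rintro (rfl | ⟨-, hx⟩)
    exacts [by simpa using hwW, hx]
  · intro hx
    by_cases hxw : x.rev = w
    · exact .inl (by rw [← hxw, Fin.rev_rev])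
    · exact .inr ⟨hxw, hx⟩

theorem countGe_rev_galeDual_add_card (r : Fin n) (S : Finset (Fin n)) :
    countGe r.rev (galeDual S) + #S = r + 1 + countGt r S := by
  have hdual : countGe r.rev (galeDual S) = #{y ∈ Iic r | y ∉ S} := by
    rw [countGe, galeDual, filter_image, card_image_of_injective _ Fin.rev_injective]
    congr 1
    ext y
    simp [Fin.rev_le_rev, and_comm]
  have hIic := card_filter_add_card_filter_not (s := Iic r) (· ∈ S)
  have hS := card_filter_add_card_filter_not (s := S) (· ≤ r)
  have hinter : ({y ∈ Iic r | y ∈ S} : Finset (Fin n)) = {y ∈ S | y ≤ r} := by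
    ext y; simp [and_comm]
  have hgt : ({y ∈ S | ¬ y ≤ r} : Finset (Fin n)) = {y ∈ S | r < y} := by
    simp only [not_le]
  rw [Fin.card_Iic, hinter] at hIic
  rw [hgt] at hS
  rw [countGt, hdual]
  omega

theorem GaleLE.dual {S T : Finset (Fin n)} (h : GaleLE S T) :
    GaleLE (galeDual S) (galeDual T) := by
  refine ⟨by rw [card_galeDual, card_galeDual, h.1], fun x => ?_⟩
  have hS := countGe_rev_galeDual_add_card x.rev S
  have hT := countGe_rev_galeDual_add_card x.rev T
  have := countGt_le_countGt_of_galeLE h x.rev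
  rw [Fin.rev_rev] at hS hT
  have := h.1
  omega

theorem IsGaleGreatest.dual {A W M : Finset (Fin n)}
    (hM : IsGaleGreatest {S | A ⊆ S ∧ GaleLE S W} M) :
    IsGaleGreatest {S | S ⊆ galeDual A ∧ GaleLE S (galeDual W)} (galeDual M) := by
  refine ⟨⟨galeDual_subset_galeDual hM.1.1, hM.1.2.dual⟩, fun S ⟨hSA, hSW⟩ => ?_⟩
  have hS : galeDual S ∈ {S | A ⊆ S ∧ GaleLE S W} := by
    refine ⟨?_, ?_⟩
    · simpa only [galeDual_galeDual] using galeDual_subset_galeDual hSA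
    · simpa only [galeDual_galeDual] using hSW.dual
  simpa only [galeDual_galeDual] using (hM.2 _ hS).dual

theorem IsGaleGreatest.subset_of_insert_of_superset {A W M N : Finset (Fin n)} {w : Fin n}
    (hwW : w ∉ W) (hw : ∀ y ∉ insert w W, w < y)
    (hM : IsGaleGreatest {S | A ⊆ S ∧ GaleLE S W} M)
    (hN : IsGaleGreatest {S | A ⊆ S ∧ GaleLE S (insert w W)} N) : M ⊆ N := by
  have hw' : ∀ y ∈ galeDual (insert w W), y < w.rev := fun y hy =>
    Fin.lt_rev_iff.2 (hw _ (mem_galeDual.1 hy))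
  -- dualizing swaps the roles of `M` and `N`
  have hM' := hM.dual
  rw [← galeDual_insert hwW] at hM'
  simpa only [galeDual_galeDual] using
    galeDual_subset_galeDual (hN.dual.subset_of_insert hw' hM')

end Duality

section InitialSets

variable {n : ℕ}

theorem mem_initSet {i : ℕ} {y : Equiv.Perm (Fin n)} {x : Fin n} :
    x ∈ initSet i y ↔ ((y⁻¹ x : Fin n) : ℕ) < i := by
  simp only [initSet, mem_image, mem_filter, mem_univ, true_and]
  constructor
  · rintro ⟨j, hj, rfl⟩
    simpa using hj
  · exact fun h => ⟨y⁻¹ x, h, by simp⟩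

theorem apply_mem_initSet_iff {i : ℕ} {y : Equiv.Perm (Fin n)} {j : Fin n} :
    y j ∈ initSet i y ↔ (j : ℕ) < i := by
  simp [mem_initSet]

theorem initSet_succ {i : ℕ} (h : i < n) (y : Equiv.Perm (Fin n)) :
    initSet (i + 1) y = insert (y ⟨i, h⟩) (initSet i y) := by
  ext x
  simp only [mem_insert, mem_initSet, ← Equiv.Perm.inv_eq_iff_eq, Fin.ext_iff]
  omega

theorem initSet_zero (y : Equiv.Perm (Fin n)) : initSet 0 y = ∅ := by
  ext x; simp [mem_initSet]

theorem initSet_of_le {i : ℕ} (h : n ≤ i) (y : Equiv.Perm (Fin n)) : initSet i y = univ := by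
  ext x; simpa [mem_initSet] using (y⁻¹ x).isLt.trans_le h

theorem initSet_mono {i j : ℕ} (h : i ≤ j) (y : Equiv.Perm (Fin n)) :
    initSet i y ⊆ initSet j y :=
  fun _ hx => mem_initSet.2 ((mem_initSet.1 hx).trans_le h)

theorem card_initSet (i : ℕ) (y : Equiv.Perm (Fin n)) : #(initSet i y) = min i n := by
  rw [initSet, card_image_of_injective _ y.injective, Fin.card_filter_val_lt, min_comm]

theorem image_Iic_eq_initSet (y : Equiv.Perm (Fin n)) (j : Fin n) :
    (Iic j).image y = initSet ((j : ℕ) + 1) y := by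
  rw [initSet]
  congr 1
  ext i
  rw [mem_Iic, mem_filter, Fin.le_def]
  simp only [mem_univ, true_and]
  omega

theorem galeLE_initSet_of_bruhatLE {y v : Equiv.Perm (Fin n)} (h : bruhatLE y v) (i : ℕ) :
    GaleLE (initSet i y) (initSet i v) := by
  rcases i with _ | i
  · rw [initSet_zero, initSet_zero]
    exact GaleLE.refl ∅
  by_cases hi : i < n
  · simpa [galeList_iff_galeLE, image_Iic_eq_initSet] using h ⟨i, hi⟩
  · rw [initSet_of_le (by omega), initSet_of_le (by omega)]
    exact GaleLE.refl univ

theorem bruhatLE_of_galeLE {y v : Equiv.Perm (Fin n)}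
    (h : ∀ i ≤ n, GaleLE (initSet i y) (initSet i v)) : bruhatLE y v := fun j => by
  simpa [galeList_iff_galeLE, image_Iic_eq_initSet] using h (j + 1) j.isLt

theorem bruhatLE_antisymm {y m : Equiv.Perm (Fin n)} (h₁ : bruhatLE y m) (h₂ : bruhatLE m y) :
    y = m := by
  have hset (i : ℕ) : initSet i y = initSet i m :=
    (galeLE_initSet_of_bruhatLE h₁ i).antisymm (galeLE_initSet_of_bruhatLE h₂ i)
  refine Equiv.ext fun j => ?_
  have hsucc := hset (j + 1)
  rw [initSet_succ j.isLt, initSet_succ j.isLt, hset j, insert_inj] at hsucc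
  · simpa using hsucc
  · rw [← hset j]
    simp [apply_mem_initSet_iff]

theorem exists_perm_initSet_eq (M : ℕ → Finset (Fin n)) (hcard : ∀ i ≤ n, #(M i) = i)
    (hmono : ∀ i < n, M i ⊆ M (i + 1)) :
    ∃ m : Equiv.Perm (Fin n), ∀ i ≤ n, initSet i m = M i := by
  have hstep (j : Fin n) : ∃ a ∉ M j, insert a (M j) = M (j + 1) :=
    exists_eq_insert_iff.2 ⟨hmono j j.isLt, by rw [hcard j j.isLt.le, hcard (j + 1) j.isLt]⟩
  choose g hgM hg using hstep
  have hmono' {i j : ℕ} (hij : i ≤ j) (hj : j ≤ n) : M i ⊆ M j := by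
    induction j, hij using Nat.le_induction with
    | base => rfl
    | succ j _ ih => exact (ih (by omega)).trans (hmono j (by omega))
  have hg_lt {j j' : Fin n} (h : j < j') : g j ≠ g j' := fun he =>
    hgM j' (hmono' (Nat.succ_le_of_lt h) j'.isLt.le (he ▸ hg j ▸ mem_insert_self _ _))
  have hinj : Function.Injective g := fun j j' he => by
    rcases lt_trichotomy j j' with h | h | h
    exacts [absurd he (hg_lt h), h, absurd he.symm (hg_lt h)]
  refine ⟨Equiv.ofBijective g (Finite.injective_iff_bijective.1 hinj), fun i hi => ?_⟩
  induction i with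
  | zero => rw [initSet_zero, eq_comm, ← card_eq_zero, hcard 0 hi]
  | succ i ih =>
    rw [initSet_succ (by omega), ih (by omega)]
    exact hg ⟨i, by omega⟩

theorem inCoset_iff_initSet_eq (k : ℕ) (u y : Equiv.Perm (Fin n)) :
    inCoset k u y ↔ initSet k y = initSet k u := by
  constructor
  · rintro ⟨σ, hσ, rfl⟩
    ext x
    have := hσ (σ⁻¹ (u⁻¹ x))
    simp only [Equiv.Perm.coe_inv, Equiv.apply_symm_apply] at this
    simp [mem_initSet, mul_inv_rev, this]
  · intro h
    refine ⟨u⁻¹ * y, fun j => ?_, by group⟩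
    rw [Equiv.Perm.mul_apply, ← mem_initSet, ← h, apply_mem_initSet_iff]

end InitialSets

section Grassmannian

variable {n k : ℕ} {v : Equiv.Perm (Fin n)} {A : Finset (Fin n)}

/-- The possible values of `initSet i y` for `y ≤ v` with `initSet k y = A`. -/
def levelFamily (k : ℕ) (A : Finset (Fin n)) (v : Equiv.Perm (Fin n)) (i : ℕ) :
    Set (Finset (Fin n)) :=
  {S | (if i ≤ k then S ⊆ A else A ⊆ S) ∧ GaleLE S (initSet i v)}

theorem initSet_mem_levelFamily {y : Equiv.Perm (Fin n)} (hy : bruhatLE y v)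
    (hyA : initSet k y = A) (i : ℕ) : initSet i y ∈ levelFamily k A v i := by
  refine ⟨?_, galeLE_initSet_of_bruhatLE hy i⟩
  split_ifs with hik
  · exact hyA ▸ initSet_mono hik y
  · exact hyA ▸ initSet_mono (by omega) y

theorem directedOn_levelFamily (i : ℕ) : DirectedOn GaleLE (levelFamily k A v i) := by
  rintro S ⟨hSA, hSv⟩ T ⟨hTA, hTv⟩
  obtain ⟨J, hJST, hSTJ, hJcard, hJcount⟩ := exists_galeSup hSv.1 hTv.1
  refine ⟨J, ⟨?_, hJcard, fun x => hJcount x ▸ max_le (hSv.2 x) (hTv.2 x)⟩,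
    ⟨hSv.1.trans hJcard.symm, fun x => hJcount x ▸ le_max_left _ _⟩,
    ⟨hTv.1.trans hJcard.symm, fun x => hJcount x ▸ le_max_right _ _⟩⟩
  split_ifs at hSA hTA ⊢
  · exact hJST.trans (union_subset hSA hTA)
  · exact (subset_inter hSA hTA).trans hSTJ

theorem levelFamily_of_le {i : ℕ} (hik : i ≤ k) :
    levelFamily k A v i = {S | S ⊆ A ∧ GaleLE S (initSet i v)} := by
  simp [levelFamily, hik]

theorem levelFamily_of_ge {i : ℕ} (hA : #A = #(initSet k v)) (hki : k ≤ i) :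
    levelFamily k A v i = {S | A ⊆ S ∧ GaleLE S (initSet i v)} := by
  ext S
  simp only [levelFamily, Set.mem_ofPred_eq]
  split_ifs with hik
  · obtain rfl : i = k := le_antisymm hik hki
    refine and_congr_left fun hS => ?_
    have hcard : #S = #A := hS.1.trans hA.symm
    exact ⟨fun h => (eq_of_subset_of_card_le h hcard.ge).ge,
      fun h => (eq_of_subset_of_card_le h hcard.le).ge⟩
  · rfl

theorem subset_of_isGaleGreatest_levelFamily (hv : IsGrassmannian k v)
    (hA : #A = #(initSet k v)) {i : ℕ} (hi : i < n) {M N : Finset (Fin n)}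
    (hM : IsGaleGreatest (levelFamily k A v i) M)
    (hN : IsGaleGreatest (levelFamily k A v (i + 1)) N) : M ⊆ N := by
  rcases lt_or_ge i k with hik | hki
  · rw [levelFamily_of_le hik.le] at hM
    rw [levelFamily_of_le hik, initSet_succ hi] at hN
    refine hM.subset_of_insert (fun y hy => ?_) hN
    simpa using hv.1 (v⁻¹ y) ⟨i, hi⟩ (mem_initSet.1 hy) hik
  · rw [levelFamily_of_ge hA hki] at hM
    rw [levelFamily_of_ge hA (hki.trans i.le_succ), initSet_succ hi] at hN
    refine hM.subset_of_insert_of_superset (by simp [apply_mem_initSet_iff]) (fun y hy => ?_) hN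
    rw [← initSet_succ hi, mem_initSet, not_lt] at hy
    simpa using hv.2 ⟨i, hi⟩ (v⁻¹ y) (Fin.lt_def.2 hy) hki

theorem exists_greatest_initSet_eq {u : Equiv.Perm (Fin n)} (hv : IsGrassmannian k v)
    (huv : bruhatLE u v) :
    ∃ m, bruhatLE m v ∧ initSet k m = initSet k u ∧
      ∀ y, bruhatLE y v → initSet k y = initSet k u → bruhatLE y m := by
  set A := initSet k u
  have hA : #A = #(initSet k v) := (galeLE_initSet_of_bruhatLE huv k).1
  have hmax (i : ℕ) : ∃ M, IsGaleGreatest (levelFamily k A v i) M :=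
    (directedOn_levelFamily i).exists_forall_rel_of_finite
      ⟨_, initSet_mem_levelFamily huv rfl i⟩ (Set.toFinite _)
  choose M hM using hmax
  obtain ⟨m, hm⟩ := exists_perm_initSet_eq M
    (fun i hi => by rw [(hM i).1.2.1, card_initSet, min_eq_left hi])
    fun i hi => subset_of_isGaleGreatest_levelFamily hv hA hi (hM i) (hM (i + 1))
  refine ⟨m, bruhatLE_of_galeLE fun i hi => hm i hi ▸ (hM i).1.2, ?_,
    fun y hy hyA => bruhatLE_of_galeLE fun i hi =>
      hm i hi ▸ (hM i).2 _ (initSet_mem_levelFamily hy hyA i)⟩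
  rcases le_or_gt k n with hk | hk
  · have hMA : M k ⊆ A := by simpa using (hM k).1.1
    rw [hm k hk]
    exact eq_of_subset_of_card_le hMA (hA.trans (hM k).1.2.1.symm).le
  · exact (initSet_of_le hk.le m).trans (initSet_of_le hk.le u).symm

end Grassmannian

/-- For `v` `k`-Grassmannian and `u ≤ v`: the unique maximal element of `[u,v]`
with initial set `u[k]` coincides with the unique maximal element of
`u·(S_k × S_{n-k}) ∩ [id,v]` with that initial set; in particular
`[u,v] ∩ u·(S_k × S_{n-k})` has a unique maximal element. -/
theorem stmt5 {n k : ℕ} (u v : Equiv.Perm (Fin n)) (hv : IsGrassmannian k v)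
    (huv : bruhatLE u v) :
    ∃! m : Equiv.Perm (Fin n),
      (bruhatLE u m ∧ bruhatLE m v ∧ initSet k m = initSet k u ∧
        (∀ y, bruhatLE u y → bruhatLE y v → initSet k y = initSet k u → bruhatLE y m)) ∧
      (inCoset k u m ∧
        (∀ y, inCoset k u y → bruhatLE y v → initSet k y = initSet k u → bruhatLE y m)) ∧
      (∀ y, inCoset k u y → bruhatLE u y → bruhatLE y v → bruhatLE y m) := by
  obtain ⟨m, hmv, hmu, hmax⟩ := exists_greatest_initSet_eq hv huv
  have hum : bruhatLE u m := hmax u huv rfl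
  refine ⟨m, ⟨⟨hum, hmv, hmu, fun y _ hyv hyu => hmax y hyv hyu⟩,
    ⟨(inCoset_iff_initSet_eq k u m).2 hmu, fun y _ hyv hyu => hmax y hyv hyu⟩,
    fun y hyu _ hyv => hmax y hyv ((inCoset_iff_initSet_eq k u y).1 hyu)⟩, ?_⟩
  rintro m' ⟨⟨-, hm'v, hm'u, hm'max⟩, -⟩
  exact bruhatLE_antisymm (hmax m' hm'v hm'u) (hm'max m hum hmv hmu)
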